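/- Let a ∈ ℝ, b = (b_1,…,b_n), c = (c_1,…,c_n) ∈ ℝ^n with no c_i a nonpositive integer, and let x ∈ ℝ^n with |x_1| + … + |x_n| < 1. Then Σ_{k=1}^n (b_k/c_k) x_k · F_A^{(n)}(a+1, b_k'; c_k'; x) = F_A^{(n)}(a+1, b; c; x) − F_A^{(n)}(a, b; c; x), where b_k' is obtained from b by increasing its k-th component by one and c_k' is obtained from c by increasing its k-th component by one. -/

import Mathlib

set_option maxHeartbeats 1000000

open Real

/-- The Pochhammer symbol `(q)_m = q (q+1) ⋯ (q+m-1)` for a real `q`. -/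
noncomputable def pochhammerR (q : ℝ) (m : ℕ) : ℝ := (ascPochhammer ℝ m).eval q

/-- The Lauricella hypergeometric series `F_A^{(n)}(a, b; c; x)`. -/
noncomputable def lauricellaSeries (n : ℕ) (a : ℝ) (b c x : Fin n → ℝ) : ℝ :=
  ∑' k : Fin n → ℕ,
    pochhammerR a (∑ i, k i) *
      ∏ i, pochhammerR (b i) (k i) / (pochhammerR (c i) (k i) * (Nat.factorial (k i) : ℝ)) *
        x i ^ (k i)

/-! ### Basic facts about the real Pochhammer symbol -/

lemma poch_zero (q : ℝ) : pochhammerR q 0 = 1 := by simp [pochhammerR]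

lemma poch_succ (q : ℝ) (m : ℕ) : pochhammerR q (m+1) = pochhammerR q m * (q + m) := by
  simp [pochhammerR, ascPochhammer_succ_right]

lemma poch_succ_left (q : ℝ) (m : ℕ) : pochhammerR q (m+1) = q * pochhammerR (q+1) m := by
  simp [pochhammerR, ascPochhammer_succ_left, Polynomial.eval_comp]

lemma abs_poch_le (q : ℝ) (m : ℕ) : |pochhammerR q m| ≤ pochhammerR |q| m := by
  induction m with
  | zero => simp [poch_zero]
  | succ m ih =>
    rw [poch_succ, poch_succ, abs_mul]
    apply mul_le_mul ih ((abs_add_le _ _).trans (by simp)) (abs_nonneg _) ?_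
    exact (abs_nonneg _).trans ih

lemma poch_nonneg {q : ℝ} (hq : 0 ≤ q) (m : ℕ) : 0 ≤ pochhammerR q m := by
  induction m with
  | zero => simp [poch_zero]
  | succ m ih => rw [poch_succ]; positivity

lemma poch_ne_zero {q : ℝ} (hq : ∀ j : ℕ, q ≠ -(j:ℝ)) (m : ℕ) : pochhammerR q m ≠ 0 := by
  induction m with
  | zero => simp [poch_zero]
  | succ m ih =>
    rw [poch_succ]
    refine mul_ne_zero ih fun h => hq m ?_
    linarith [h]

/-! ### Growth estimates -/

lemma poch_upper {q : ℝ} (hq : 0 ≤ q) {r : ℝ} (hr : 1 < r) :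
    ∃ C : ℝ, 0 < C ∧ ∀ m : ℕ, pochhammerR q m ≤ C * m.factorial * r ^ m := by
  set N : ℕ := ⌈q / (r - 1)⌉₊ with hN
  set C : ℝ := Finset.sup' (Finset.range (N+1)) (by simp) fun j =>
    pochhammerR q j / (j.factorial * r ^ j) with hC
  have hrp : (0:ℝ) < r := by linarith
  have hCge : ∀ j, j ≤ N → pochhammerR q j / (j.factorial * r ^ j) ≤ C := by
    intro j hj
    rw [hC]
    exact Finset.le_sup' (fun j => pochhammerR q j / (j.factorial * r ^ j))
      (Finset.mem_range.2 (Nat.lt_succ_of_le hj))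
  have hC1 : (1:ℝ) ≤ C := by
    have := hCge 0 (Nat.zero_le _)
    simpa [poch_zero] using this
  refine ⟨C, by linarith, fun m => ?_⟩
  induction m with
  | zero => simpa [poch_zero] using hC1
  | succ m ih =>
    rcases le_or_gt (m+1) N with h | h
    · have := hCge (m+1) h
      have hpos : (0:ℝ) < (m+1).factorial * r ^ (m+1) := by positivity
      calc pochhammerR q (m+1) ≤ C * ((m+1).factorial * r ^ (m+1)) := (div_le_iff₀ hpos).1 this
        _ = C * (m+1).factorial * r ^ (m+1) := by ring
    · have hm : (N:ℝ) ≤ m := by exact_mod_cast Nat.lt_succ_iff.1 h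
      have hq2 : q / (r-1) ≤ (N:ℝ) := Nat.le_ceil _
      have hstep : q + m ≤ r * (m+1) := by
        have h1 : q / (r-1) ≤ (m:ℝ) := le_trans hq2 hm
        have h2 : q ≤ (m:ℝ) * (r-1) := by
          rw [div_le_iff₀ (by linarith)] at h1; linarith
        nlinarith
      rw [poch_succ]
      calc pochhammerR q m * (q + m)
          ≤ C * m.factorial * r ^ m * (r * (m+1)) := by
            apply mul_le_mul ih hstep (by positivity) (by positivity)
        _ = C * ((m+1) * m.factorial) * r ^ (m+1) := by ring
        _ = C * (m+1).factorial * r ^ (m+1) := by rw [Nat.factorial_succ]; push_cast; ring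

lemma poch_lower {q : ℝ} (hq : ∀ j : ℕ, q ≠ -(j:ℝ)) {r : ℝ} (hr : 1 < r) :
    ∃ d : ℝ, 0 < d ∧ ∀ m : ℕ, d * m.factorial ≤ |pochhammerR q m| * r ^ m := by
  set N : ℕ := ⌈(r * |q| + 1) / (r - 1)⌉₊ with hN
  have hrp : (0:ℝ) < r := by linarith
  have hne : ∀ m, |pochhammerR q m| > 0 := fun m => abs_pos.2 (poch_ne_zero hq m)
  set d : ℝ := Finset.inf' (Finset.range (N+1)) (by simp) fun j =>
    |pochhammerR q j| * r ^ j / j.factorial with hd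
  have hdle : ∀ j, j ≤ N → d ≤ |pochhammerR q j| * r ^ j / j.factorial := by
    intro j hj
    rw [hd]
    exact Finset.inf'_le (fun j => |pochhammerR q j| * r ^ j / j.factorial)
      (Finset.mem_range.2 (Nat.lt_succ_of_le hj))
  have hdpos : 0 < d := by
    rw [hd, Finset.lt_inf'_iff]
    intro j _
    have := hne j
    positivity
  refine ⟨d, hdpos, fun m => ?_⟩
  induction m with
  | zero =>
    have := hdle 0 (Nat.zero_le _)
    simpa [poch_zero] using this
  | succ m ih =>
    rcases le_or_gt (m+1) N with h | h
    · have := hdle (m+1) h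
      have hpos : (0:ℝ) < ((m+1).factorial : ℝ) := by positivity
      rw [le_div_iff₀ hpos] at this
      linarith
    · have hm : (N:ℝ) ≤ m := by exact_mod_cast Nat.lt_succ_iff.1 h
      have hq2 : (r * |q| + 1) / (r-1) ≤ (N:ℝ) := Nat.le_ceil _
      have h3 : r * |q| + 1 ≤ (m:ℝ) * (r-1) := by
        have h1 : (r * |q| + 1) / (r-1) ≤ (m:ℝ) := le_trans hq2 hm
        rw [div_le_iff₀ (by linarith)] at h1; linarith
      have habs : (0:ℝ) ≤ |q| := abs_nonneg q
      have hmq : |q| ≤ (m:ℝ) := by nlinarith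
      have hstep : (m:ℝ) + 1 ≤ |q + m| * r := by
        have h5 : q + m ≥ m - |q| := by
          have := neg_abs_le q; linarith
        have h6 : (0:ℝ) ≤ q + m := by linarith
        rw [abs_of_nonneg h6]
        nlinarith
      rw [poch_succ, abs_mul]
      calc d * ((m+1).factorial : ℝ) = d * m.factorial * (m+1) := by
            rw [Nat.factorial_succ]; push_cast; ring
        _ ≤ |pochhammerR q m| * r ^ m * (|q + m| * r) := by
            apply mul_le_mul ih hstep (by positivity) (by positivity)
        _ = |pochhammerR q m| * |q + m| * r ^ (m+1) := by ring

/-! ### Summability -/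

lemma summable_pow_sum {t : ℝ} (ht0 : 0 ≤ t) (ht1 : t < 1) (n : ℕ) :
    Summable (fun k : Fin n → ℕ => t ^ (∑ i, k i)) := by
  induction n with
  | zero =>
    have : (fun k : Fin 0 → ℕ => t ^ (∑ i, k i)) = fun _ => 1 := by
      funext k; simp
    rw [this]
    exact summable_of_finite_support (Set.toFinite _)
  | succ n ih =>
    have h1 : Summable (fun m : ℕ => t ^ m) := summable_geometric_of_lt_one ht0 ht1
    have hg : Summable (fun p : ℕ × (Fin n → ℕ) => t ^ p.1 * t ^ (∑ i, p.2 i)) :=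
      Summable.mul_of_nonneg (f := fun m : ℕ => t ^ m)
        (g := fun k : Fin n → ℕ => t ^ (∑ i, k i)) h1 ih
        (fun m => pow_nonneg ht0 m) (fun p => pow_nonneg ht0 _)
    have h2 := hg.comp_injective
      (Equiv.injective (Fin.consEquiv (fun _ : Fin (n+1) => ℕ)).symm)
    refine h2.congr fun k => ?_
    simp only [Function.comp]
    rw [Fin.sum_univ_succ, pow_add]
    rfl

lemma multinomial_bound {n : ℕ} (y : Fin n → ℝ) (hy : ∀ i, 0 ≤ y i) (k : Fin n → ℕ) :
    (Nat.multinomial Finset.univ k : ℝ) * ∏ i, y i ^ k i ≤ (∑ i, y i) ^ (∑ i, k i) := by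
  rw [Finset.sum_pow_eq_sum_piAntidiag Finset.univ y (∑ i, k i)]
  have hk : k ∈ Finset.piAntidiag Finset.univ (∑ i, k i) := by
    rw [Finset.mem_piAntidiag]; exact ⟨rfl, fun i _ => Finset.mem_univ i⟩
  refine Finset.single_le_sum
    (f := fun k' => (Nat.multinomial Finset.univ k' : ℝ) * ∏ i, y i ^ k' i)
    (fun k' _ => ?_) hk
  have : (0:ℝ) ≤ ∏ i, y i ^ k' i := Finset.prod_nonneg fun i _ => pow_nonneg (hy i) _
  positivity

lemma exists_rho {s : ℝ} (hs0 : 0 ≤ s) (hs1 : s < 1) : ∃ ρ : ℝ, 1 < ρ ∧ ρ ^ 3 * s < 1 := by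
  set b : ℝ := 2 / (1 + s) with hb
  have hb1 : 1 < b := by
    rw [hb, lt_div_iff₀ (by linarith)]; linarith
  refine ⟨b ^ ((1:ℝ)/3), ?_, ?_⟩
  · rw [Real.one_lt_rpow_iff_of_pos (by linarith)]
    exact Or.inl ⟨hb1, by norm_num⟩
  · have h3 : (b ^ ((1:ℝ)/3)) ^ 3 = b := by
      rw [← Real.rpow_natCast (b ^ ((1:ℝ)/3)) 3, ← Real.rpow_mul (by linarith)]
      norm_num
    rw [h3, hb, div_mul_eq_mul_div, div_lt_one (by linarith)]
    linarith

section main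

variable {n : ℕ} (a : ℝ) (b c x : Fin n → ℝ)

/-- The general term of the Lauricella series. -/
noncomputable def lTerm (k : Fin n → ℕ) : ℝ :=
  pochhammerR a (∑ i, k i) *
    ∏ i, pochhammerR (b i) (k i) /
      (pochhammerR (c i) (k i) * (Nat.factorial (k i) : ℝ)) * x i ^ (k i)

/-- The auxiliary term appearing after shifting the `k`-th index. -/
noncomputable def hTerm (k : Fin n) (κ : Fin n → ℕ) : ℝ :=
  (κ k : ℝ) * pochhammerR (a + 1) ((∑ i, κ i) - 1) *
    ∏ i, pochhammerR (b i) (κ i) /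
      (pochhammerR (c i) (κ i) * (Nat.factorial (κ i) : ℝ)) * x i ^ (κ i)

lemma summable_lTerm (hc : ∀ i, ∀ j : ℕ, c i ≠ -(j : ℝ)) (hx : ∑ i, |x i| < 1) :
    Summable (lTerm a b c x) := by
  unfold lTerm
  set s := ∑ i, |x i| with hs
  have hs0 : 0 ≤ s := Finset.sum_nonneg fun i _ => abs_nonneg _
  obtain ⟨ρ, hρ, hρs⟩ := exists_rho hs0 hx
  have hρ0 : (0:ℝ) < ρ := by linarith
  obtain ⟨Ca, hCa, hA⟩ := poch_upper (abs_nonneg a) hρ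
  choose Cb hCb0 hCb using fun i => poch_upper (abs_nonneg (b i)) hρ
  choose d hd0 hd using fun i => poch_lower (hc i) hρ
  set K := Ca * ∏ i, Cb i / d i with hK
  rw [← summable_abs_iff]
  refine Summable.of_nonneg_of_le (fun k => abs_nonneg _) ?_
    ((summable_pow_sum (t := ρ^3 * s) (by positivity) hρs n).mul_left K)
  intro k
  set m := ∑ i, k i with hm
  have hfac : ∀ i : Fin n, (0:ℝ) < ((k i).factorial : ℝ) := fun i => by
    exact_mod_cast Nat.factorial_pos (k i)
  have step1 : |pochhammerR a m *
      ∏ i, pochhammerR (b i) (k i) /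
        (pochhammerR (c i) (k i) * (Nat.factorial (k i) : ℝ)) * x i ^ (k i)|
      = |pochhammerR a m| * ∏ i,
          |pochhammerR (b i) (k i)| * |x i| ^ (k i) /
            (|pochhammerR (c i) (k i)| * (Nat.factorial (k i) : ℝ)) := by
    rw [abs_mul, Finset.abs_prod]
    congr 1
    refine Finset.prod_congr rfl fun i _ => ?_
    rw [abs_mul, abs_div, abs_mul, abs_pow]
    rw [abs_of_pos (hfac i)]
    ring
  rw [step1]
  have hBi : ∀ i : Fin n,
      |pochhammerR (b i) (k i)| * |x i| ^ (k i) /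
        (|pochhammerR (c i) (k i)| * (Nat.factorial (k i) : ℝ))
      ≤ (Cb i / d i) * (ρ^2) ^ (k i) * |x i| ^ (k i) / ((k i).factorial : ℝ) := by
    intro i
    have hpc : 0 < |pochhammerR (c i) (k i)| := abs_pos.2 (poch_ne_zero (hc i) _)
    have hnum : |pochhammerR (b i) (k i)| * |x i| ^ (k i)
        ≤ Cb i * ((k i).factorial : ℝ) * ρ ^ (k i) * |x i| ^ (k i) := by
      apply mul_le_mul_of_nonneg_right _ (pow_nonneg (abs_nonneg _) _)
      exact ((abs_poch_le _ _).trans (hCb i (k i)))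
    have hden : d i * ((k i).factorial : ℝ) / ρ ^ (k i) ≤ |pochhammerR (c i) (k i)| := by
      rw [div_le_iff₀ (by positivity)]
      exact hd i (k i)
    have hdenpos : (0:ℝ) < d i * ((k i).factorial : ℝ) / ρ ^ (k i) :=
      div_pos (mul_pos (hd0 i) (hfac i)) (pow_pos hρ0 _)
    calc |pochhammerR (b i) (k i)| * |x i| ^ (k i) /
          (|pochhammerR (c i) (k i)| * (Nat.factorial (k i) : ℝ))
        ≤ (Cb i * ((k i).factorial : ℝ) * ρ ^ (k i) * |x i| ^ (k i)) /
            ((d i * ((k i).factorial : ℝ) / ρ ^ (k i)) * ((k i).factorial : ℝ)) := by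
          refine div_le_div₀ (mul_nonneg (mul_nonneg (mul_nonneg (hCb0 i).le (hfac i).le)
            (pow_nonneg hρ0.le _)) (pow_nonneg (abs_nonneg _) _)) hnum
            (mul_pos hdenpos (hfac i)) ?_
          exact mul_le_mul_of_nonneg_right hden (le_of_lt (hfac i))
      _ = (Cb i / d i) * (ρ^2) ^ (k i) * |x i| ^ (k i) / ((k i).factorial : ℝ) := by
          have h1 : d i ≠ 0 := (hd0 i).ne'
          have h2 : ((k i).factorial : ℝ) ≠ 0 := (hfac i).ne'
          have h3 : ρ ≠ 0 := hρ0.ne'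
          rw [← pow_mul]
          field_simp
          ring
  have prodbound : ∏ i, (|pochhammerR (b i) (k i)| * |x i| ^ (k i) /
        (|pochhammerR (c i) (k i)| * (Nat.factorial (k i) : ℝ)))
      ≤ ∏ i, ((Cb i / d i) * (ρ^2) ^ (k i) * |x i| ^ (k i) / ((k i).factorial : ℝ)) := by
    apply Finset.prod_le_prod
    · intro i _
      have hpc : 0 < |pochhammerR (c i) (k i)| := abs_pos.2 (poch_ne_zero (hc i) _)
      positivity
    · intro i _; exact hBi i
  have aBound : |pochhammerR a m| ≤ Ca * m.factorial * ρ ^ m :=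
    (abs_poch_le a m).trans (hA m)
  have prodpos : (0:ℝ) ≤ ∏ i, (|pochhammerR (b i) (k i)| * |x i| ^ (k i) /
      (|pochhammerR (c i) (k i)| * (Nat.factorial (k i) : ℝ))) := by
    apply Finset.prod_nonneg
    intro i _
    have hpc : 0 < |pochhammerR (c i) (k i)| := abs_pos.2 (poch_ne_zero (hc i) _)
    positivity
  calc |pochhammerR a m| * ∏ i,
        |pochhammerR (b i) (k i)| * |x i| ^ (k i) /
          (|pochhammerR (c i) (k i)| * (Nat.factorial (k i) : ℝ))
      ≤ (Ca * m.factorial * ρ ^ m) *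
          ∏ i, ((Cb i / d i) * (ρ^2) ^ (k i) * |x i| ^ (k i) / ((k i).factorial : ℝ)) := by
        apply mul_le_mul aBound prodbound prodpos (by positivity)
    _ = (Ca * ∏ i, Cb i / d i) * (ρ ^ m * (ρ^2) ^ m) *
          ((m.factorial : ℝ) / (∏ i, ((k i).factorial : ℝ)) * ∏ i, |x i| ^ (k i)) := by
        rw [Finset.prod_div_distrib, Finset.prod_mul_distrib, Finset.prod_mul_distrib,
          Finset.prod_pow_eq_pow_sum, ← hm]
        field_simp
    _ ≤ (Ca * ∏ i, Cb i / d i) * (ρ ^ m * (ρ^2) ^ m) * (s ^ m) := by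
        have hKpos : (0:ℝ) < Ca * ∏ i, Cb i / d i :=
          mul_pos hCa (Finset.prod_pos fun i _ => div_pos (hCb0 i) (hd0 i))
        apply mul_le_mul_of_nonneg_left _ (mul_nonneg hKpos.le (by positivity))
        have hspec := Nat.multinomial_spec (Finset.univ) k
        have hmf : (m.factorial : ℝ) =
            (∏ i, ((k i).factorial : ℝ)) * (Nat.multinomial Finset.univ k : ℝ) := by
          rw [hm]
          exact_mod_cast congrArg (Nat.cast : ℕ → ℝ) hspec.symm
        have hfp : (0:ℝ) < ∏ i, ((k i).factorial : ℝ) :=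
          Finset.prod_pos fun i _ => hfac i
        rw [hmf, mul_comm ((∏ i, ((k i).factorial : ℝ)))
          ((Nat.multinomial Finset.univ k : ℝ)), mul_div_assoc,
          div_self hfp.ne', mul_one, hs, hm]
        exact multinomial_bound (fun i => |x i|) (fun i => abs_nonneg _) k
    _ = K * (ρ^3 * s) ^ m := by
        rw [hK, mul_pow]
        ring

lemma sum_update_succ (k : Fin n) (κ : Fin n → ℕ) :
    ∑ i, (Function.update κ k (κ k + 1)) i = (∑ i, κ i) + 1 := by
  rw [Finset.sum_update_of_mem (Finset.mem_univ k)]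
  rw [← Finset.add_sum_erase _ κ (Finset.mem_univ k)]
  rw [Finset.sdiff_singleton_eq_erase]
  ring

lemma shift_identity (k : Fin n) (hc : ∀ i, ∀ j : ℕ, c i ≠ -(j : ℝ)) (κ : Fin n → ℕ) :
    b k / c k * x k *
      lTerm (a + 1) (Function.update b k (b k + 1)) (Function.update c k (c k + 1)) x κ
    = hTerm a b c x k (Function.update κ k (κ k + 1)) := by
  set κ' := Function.update κ k (κ k + 1) with hκ'
  have hsum : ∑ i, κ' i = (∑ i, κ i) + 1 := sum_update_succ k κ
  rw [lTerm, hTerm, hsum]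
  simp only [Nat.add_sub_cancel]
  have hκ'k : κ' k = κ k + 1 := Function.update_self k _ κ
  rw [← Finset.prod_erase_mul Finset.univ _ (Finset.mem_univ k),
    ← Finset.prod_erase_mul Finset.univ _ (Finset.mem_univ k)]
  have hrest : ∏ i ∈ Finset.univ.erase k,
      pochhammerR (Function.update b k (b k + 1) i) (κ i) /
        (pochhammerR (Function.update c k (c k + 1) i) (κ i) * (Nat.factorial (κ i) : ℝ)) *
          x i ^ (κ i)
      = ∏ i ∈ Finset.univ.erase k,
        pochhammerR (b i) (κ' i) /
          (pochhammerR (c i) (κ' i) * (Nat.factorial (κ' i) : ℝ)) * x i ^ (κ' i) := by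
    refine Finset.prod_congr rfl fun i hi => ?_
    have hik : i ≠ k := Finset.ne_of_mem_erase hi
    rw [Function.update_of_ne hik, Function.update_of_ne hik, hκ', Function.update_of_ne hik]
  rw [← hrest]
  have hb' : Function.update b k (b k + 1) k = b k + 1 := Function.update_self k _ b
  have hc' : Function.update c k (c k + 1) k = c k + 1 := Function.update_self k _ c
  rw [hb', hc', hκ'k]
  have hpb : pochhammerR (b k) (κ k + 1) = b k * pochhammerR (b k + 1) (κ k) :=
    poch_succ_left _ _
  have hpc : pochhammerR (c k) (κ k + 1) = c k * pochhammerR (c k + 1) (κ k) :=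
    poch_succ_left _ _
  rw [hpb, hpc]
  have hfac : (Nat.factorial (κ k + 1) : ℝ) = (κ k + 1) * (Nat.factorial (κ k) : ℝ) := by
    rw [Nat.factorial_succ]; push_cast; ring
  rw [hfac]
  have hck : c k ≠ 0 := by
    have := hc k 0; simpa using this
  have hpc' : pochhammerR (c k + 1) (κ k) ≠ 0 := by
    apply poch_ne_zero
    intro j h
    have : c k = -((j+1 : ℕ) : ℝ) := by push_cast; linarith
    exact hc k (j+1) this
  have hfk : (Nat.factorial (κ k) : ℝ) ≠ 0 := by
    exact_mod_cast (Nat.factorial_pos (κ k)).ne'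
  have hk1 : ((κ k : ℝ) + 1) ≠ 0 := by positivity
  push_cast
  have key : b k / c k * x k *
      (pochhammerR (b k + 1) (κ k) /
        (pochhammerR (c k + 1) (κ k) * (Nat.factorial (κ k) : ℝ)) * x k ^ κ k)
      = ((κ k : ℝ) + 1) *
        (b k * pochhammerR (b k + 1) (κ k) /
          (c k * pochhammerR (c k + 1) (κ k) * (((κ k : ℝ) + 1) * (Nat.factorial (κ k) : ℝ))) *
            x k ^ (κ k + 1)) := by
    field_simp
    ring
  linear_combination (pochhammerR (a + 1) (∑ i, κ i) *
    ∏ i ∈ Finset.univ.erase k,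
      pochhammerR (Function.update b k (b k + 1) i) (κ i) /
        (pochhammerR (Function.update c k (c k + 1) i) (κ i) * (Nat.factorial (κ i) : ℝ)) *
          x i ^ (κ i)) * key

lemma poch_diff (a : ℝ) (m : ℕ) :
    (m : ℝ) * pochhammerR (a + 1) (m - 1) = pochhammerR (a + 1) m - pochhammerR a m := by
  cases m with
  | zero => simp [poch_zero]
  | succ m =>
    simp only [Nat.add_sub_cancel]
    rw [poch_succ (a+1) m, poch_succ_left a m]
    push_cast
    ring

lemma sum_hTerm (κ : Fin n → ℕ) :
    ∑ k, hTerm a b c x k κ = lTerm (a+1) b c x κ - lTerm a b c x κ := by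
  simp only [hTerm, lTerm]
  rw [← Finset.sum_mul, ← Finset.sum_mul, ← Nat.cast_sum, poch_diff]
  ring

end main

/-- The adjacent relation for the Lauricella function:
`Σ_{k=1}^n (b_k/c_k) x_k F_A^{(n)}(a+1, b_k'; c_k'; x)
   = F_A^{(n)}(a+1, b; c; x) − F_A^{(n)}(a, b; c; x)`,
where `b_k'` (resp. `c_k'`) is obtained from `b` (resp. `c`) by increasing the `k`-th
component by one. -/
theorem lauricella_adjacent (n : ℕ) (hn : 1 ≤ n) (a : ℝ) (b c : Fin n → ℝ)
    (hc : ∀ i, ∀ j : ℕ, c i ≠ -(j : ℝ))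
    (x : Fin n → ℝ) (hx : ∑ i, |x i| < 1) :
    ∑ k, b k / c k * x k *
        lauricellaSeries n (a + 1) (Function.update b k (b k + 1))
          (Function.update c k (c k + 1)) x =
      lauricellaSeries n (a + 1) b c x - lauricellaSeries n a b c x := by
  classical
  -- the updated parameters still satisfy the hypotheses
  have hcup : ∀ k : Fin n, ∀ i, ∀ j : ℕ, (Function.update c k (c k + 1)) i ≠ -(j:ℝ) := by
    intro k i j
    rcases eq_or_ne i k with rfl | h
    · rw [Function.update_self]
      intro hEq
      exact hc i (j+1) (by push_cast; linarith)
    · rw [Function.update_of_ne h]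
      exact hc i j
  have hS1 : Summable (lTerm a b c x) := summable_lTerm a b c x hc hx
  have hS2 : Summable (lTerm (a+1) b c x) := summable_lTerm (a+1) b c x hc hx
  -- the shift maps
  set φ : Fin n → (Fin n → ℕ) → (Fin n → ℕ) :=
    fun k κ => Function.update κ k (κ k + 1) with hφ
  have hφinj : ∀ k : Fin n, Function.Injective (φ k) := by
    intro k κ1 κ2 h
    funext i
    rcases eq_or_ne i k with rfl | hik
    · have := congrFun h i
      simp only [hφ, Function.update_self] at this
      omega
    · have := congrFun h i
      simpa [hφ, Function.update_of_ne hik] using this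
  have hrange : ∀ (k : Fin n) (κ : Fin n → ℕ),
      κ ∉ Set.range (φ k) → hTerm a b c x k κ = 0 := by
    intro k κ hκ
    rcases Nat.eq_zero_or_pos (κ k) with h0 | hpos
    · simp [hTerm, h0]
    · exfalso
      apply hκ
      refine ⟨Function.update κ k (κ k - 1), ?_⟩
      simp only [hφ, Function.update_self, Function.update_idem]
      have : κ k - 1 + 1 = κ k := Nat.succ_pred_eq_of_pos hpos
      rw [this, Function.update_eq_self]
  have hsupp : ∀ k : Fin n, Function.support (hTerm a b c x k) ⊆ Set.range (φ k) := by
    intro k κ hκ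
    by_contra hno
    exact hκ (hrange k κ hno)
  -- each shifted series
  have hshift : ∀ k : Fin n,
      b k / c k * x k *
        lauricellaSeries n (a + 1) (Function.update b k (b k + 1))
          (Function.update c k (c k + 1)) x
      = ∑' κ, hTerm a b c x k κ := by
    intro k
    have h1 : lauricellaSeries n (a + 1) (Function.update b k (b k + 1))
        (Function.update c k (c k + 1)) x
        = ∑' κ, lTerm (a+1) (Function.update b k (b k + 1))
            (Function.update c k (c k + 1)) x κ := rfl
    rw [h1, ← tsum_mul_left]
    rw [tsum_congr (fun κ => shift_identity a b c x k hc κ)]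
    exact (hφinj k).tsum_eq (hsupp k)
  have hHsum : ∀ k : Fin n, Summable (hTerm a b c x k) := by
    intro k
    rw [← Function.Injective.summable_iff (hφinj k) (fun κ hκ => hrange k κ hκ)]
    have h2 : (hTerm a b c x k ∘ φ k)
        = fun κ => b k / c k * x k *
            lTerm (a+1) (Function.update b k (b k + 1))
              (Function.update c k (c k + 1)) x κ :=
      funext fun κ => (shift_identity a b c x k hc κ).symm
    rw [h2]
    exact (summable_lTerm (a+1) (Function.update b k (b k + 1))
      (Function.update c k (c k + 1)) x (hcup k) hx).mul_left _
  calc ∑ k, b k / c k * x k *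
        lauricellaSeries n (a + 1) (Function.update b k (b k + 1))
          (Function.update c k (c k + 1)) x
      = ∑ k, ∑' κ, hTerm a b c x k κ := Finset.sum_congr rfl fun k _ => hshift k
    _ = ∑' κ, ∑ k, hTerm a b c x k κ := (Summable.tsum_finsetSum fun k _ => hHsum k).symm
    _ = ∑' κ, (lTerm (a+1) b c x κ - lTerm a b c x κ) :=
        tsum_congr fun κ => sum_hTerm a b c x κ
    _ = lauricellaSeries n (a + 1) b c x - lauricellaSeries n a b c x := Summable.tsum_sub hS2 hS1
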